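/- arXiv:2102.13511 — 4 statements merged into one kernel-verified Lean document; each statement's English description precedes it below -/
import Mathlib

section
/- Let π be a group and γ, δ ∈ π with γ ≠ δ. Then H_{γ,e} ∩ H_{δ,e} = H_{γ, δ⁻¹γ}; in particular, the intersection of two distinct conjugates (γ,e)·Δ(π)·(γ⁻¹,e) and (δ,e)·Δ(π)·(δ⁻¹,e) of the diagonal equals (γ,e)·Δ(Z_π(δ⁻¹γ))·(γ⁻¹,e). -/
/-!
An element of `H_{γ,S}` is `(γ z γ⁻¹, z)` with `z ∈ Z(S)`, so it is determined by its second
coordinate. It also lies in `H_{δ,T}` exactly when `z ∈ Z(T)` and conjugation by `γ` and by `δ`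
agree on `z`, i.e. when `z` commutes with `δ⁻¹ γ`. Hence
`H_{γ,S} ∩ H_{δ,T} = H_{γ, S ∪ T ∪ {δ⁻¹γ}}`, and `e` is central.
-/

/-- The diagonal homomorphism `π → π × π`. -/
def diagHom (π : Type*) [Group π] : π →* π × π :=
  MonoidHom.prod (MonoidHom.id π) (MonoidHom.id π)

/-- The subgroup `H_{γ,S} = (γ,e)·Δ(Z_π(S))·(γ⁻¹,e)` of `π × π`. -/
def Hsub {π : Type*} [Group π] (γ : π) (S : Set π) : Subgroup (π × π) :=
  Subgroup.map (MulAut.conj ((γ, (1 : π)) : π × π)).toMonoidHom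
    (Subgroup.map (diagHom π) (Subgroup.centralizer S))

section

variable {G : Type*} [Group G]

theorem Subgroup.mem_centralizer_union {S T : Set G} {z : G} :
    z ∈ centralizer (S ∪ T) ↔ z ∈ centralizer S ∧ z ∈ centralizer T := by
  simp only [mem_centralizer_iff, Set.mem_union, or_imp, forall_and]

theorem Subgroup.centralizer_insert_one (S : Set G) : centralizer (insert 1 S) = centralizer S := by
  ext z
  simp [mem_centralizer_iff]

theorem conj_eq_conj_iff_commute {γ δ z : G} :
    γ * z * γ⁻¹ = δ * z * δ⁻¹ ↔ Commute (δ⁻¹ * γ) z := by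
  rw [commute_iff_eq, eq_mul_inv_iff_mul_eq, ← inv_mul_eq_iff_eq_mul, ← mul_inv_eq_iff_eq_mul]
  simp only [mul_assoc, mul_inv_rev, inv_inv]

theorem mem_Hsub_iff {γ : G} {S : Set G} {x : G × G} :
    x ∈ Hsub γ S ↔ x.2 ∈ Subgroup.centralizer S ∧ x.1 = γ * x.2 * γ⁻¹ := by
  obtain ⟨a, z⟩ := x
  simp only [Hsub, Subgroup.mem_map, MulEquiv.coe_toMonoidHom, MulAut.conj_apply]
  constructor
  · rintro ⟨_, ⟨w, hw, rfl⟩, h⟩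
    simp only [diagHom, MonoidHom.prod_apply, MonoidHom.id_apply, Prod.ext_iff, Prod.fst_mul,
      Prod.snd_mul, Prod.fst_inv, Prod.snd_inv, mul_one, one_mul, inv_one] at h
    obtain ⟨rfl, rfl⟩ := h
    exact ⟨hw, rfl⟩
  · rintro ⟨hz, rfl⟩
    exact ⟨(z, z), ⟨z, hz, rfl⟩, by simp⟩

theorem Hsub_inf_Hsub (γ δ : G) (S T : Set G) :
    Hsub γ S ⊓ Hsub δ T = Hsub γ (S ∪ T ∪ {δ⁻¹ * γ}) := by
  ext ⟨a, z⟩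
  simp only [Subgroup.mem_inf, mem_Hsub_iff, Subgroup.mem_centralizer_union,
    Subgroup.mem_centralizer_singleton_iff]
  constructor
  · rintro ⟨⟨hS, rfl⟩, hT, hconj⟩
    exact ⟨⟨⟨hS, hT⟩, (conj_eq_conj_iff_commute.mp hconj).symm⟩, rfl⟩
  · rintro ⟨⟨⟨hS, hT⟩, hcomm⟩, rfl⟩
    exact ⟨⟨hS, rfl⟩, hT, conj_eq_conj_iff_commute.mpr hcomm.symm⟩

end

theorem Hsub_e_inter_general {π : Type*} [Group π] (γ δ : π) :
    Hsub γ ({1} : Set π) ⊓ Hsub δ ({1} : Set π) = Hsub γ ({δ⁻¹ * γ} : Set π) := by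
  rw [Hsub_inf_Hsub, Set.union_self, Set.singleton_union]
  simp only [Hsub, Subgroup.centralizer_insert_one]

/-- For `γ ≠ δ`, `H_{γ,e} ∩ H_{δ,e} = H_{γ,δ⁻¹γ}`, i.e. the intersection of the two distinct
conjugates `(γ,e)·Δ(π)·(γ⁻¹,e)` and `(δ,e)·Δ(π)·(δ⁻¹,e)` of the diagonal equals
`(γ,e)·Δ(Z_π(δ⁻¹γ))·(γ⁻¹,e)`. -/
theorem Hsub_e_inter {π : Type*} [Group π] (γ δ : π) (hne : γ ≠ δ) :
    Hsub γ ({1} : Set π) ⊓ Hsub δ ({1} : Set π) = Hsub γ ({δ⁻¹ * γ} : Set π) :=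
  Hsub_e_inter_general γ δ
end

section
/- Let π be a group as in the Setup. Then for every b ∈ π∖{e}, the centralizer Z_π(b) is abelian and Z_π(Z_π(b)) = Z_π(b), where Z_π(Z_π(b)) denotes the centralizer in π of the subgroup Z_π(b). -/
/-- A family `P` of subgroups of `π` is a malnormal collection if for all `i, j` and `g ∈ π`,
either `gP_ig⁻¹ ∩ P_j = {e}`, or `i = j` and `g ∈ P_i`. -/
def IsMalnormalCollection {π : Type*} [Group π] {I : Type*} (P : I → Subgroup π) : Prop :=
  ∀ i j : I, ∀ g : π,
    Subgroup.map (MulAut.conj g).toMonoidHom (P i) ⊓ P j = ⊥ ∨ (i = j ∧ g ∈ P i)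

/-- A monoid is torsion-free if no element other than `1` has finite order
(the definition of `Monoid.IsTorsionFree` in the older Mathlib, since removed). -/
def Monoid.IsTorsionFree (G : Type*) [Monoid G] : Prop :=
  ∀ g : G, g ≠ 1 → ¬IsOfFinOrder g

/-
If `b` is conjugate into some `P i`, say `b' = g b g⁻¹ ∈ P i`, malnormality of `P i`
forces every element commuting with `b' ≠ 1` into `P i`, so `Z(b')` is abelian, and `Z(b)` is its
conjugate. Otherwise `Z(b)` is cyclic by hypothesis. Once `Z(b)` is abelian, `Z(b) ≤ Z(Z(b))`,
while `b ∈ Z(b)` gives `Z(Z(b)) ≤ Z(b)`.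
-/

open Subgroup

section

variable {G : Type*} [Group G]

theorem Subgroup.isMulCommutative_of_le {H K : Subgroup G} (hKH : K ≤ H) [IsMulCommutative H] :
    IsMulCommutative K :=
  .of_setLike_mul_comm fun _ ha _ hb ↦ setLike_mul_comm (hKH ha) (hKH hb)

theorem Subgroup.comap_centralizer_singleton {G' : Type*} [Group G'] (f : G →* G')
    (hf : Function.Injective f) (b : G) :
    (centralizer {f b}).comap f = centralizer {b} := by
  ext x
  simp only [mem_comap, mem_centralizer_singleton_iff, ← map_mul, hf.eq_iff]

theorem Subgroup.centralizer_centralizer_singleton (b : G) [IsMulCommutative (centralizer {b})] :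
    centralizer (centralizer {b} : Set G) = centralizer {b} :=
  le_antisymm
    (centralizer_le (Set.singleton_subset_iff.mpr (mem_centralizer_singleton_iff.mpr rfl)))
    (le_centralizer _)

namespace IsMalnormalCollection

variable {I : Type*} {P : I → Subgroup G}

theorem mem_of_conj_mem (hP : IsMalnormalCollection P) {i : I} {a x : G} (ha : a ∈ P i)
    (ha1 : a ≠ 1) (hxa : x * a * x⁻¹ ∈ P i) : x ∈ P i := by
  refine ((hP i i x).resolve_left fun hbot ↦ ha1 ?_).2
  have hmem : x * a * x⁻¹ ∈ (P i).map (MulAut.conj x).toMonoidHom ⊓ P i :=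
    ⟨⟨a, ha, rfl⟩, hxa⟩
  rwa [hbot, mem_bot, conj_eq_one_iff] at hmem

theorem centralizer_le (hP : IsMalnormalCollection P) {i : I} {a : G} (ha : a ∈ P i)
    (ha1 : a ≠ 1) : centralizer {a} ≤ P i := fun x hx ↦
  hP.mem_of_conj_mem ha ha1 (by rwa [mem_centralizer_singleton_iff.mp hx, mul_inv_cancel_right])

theorem isMulCommutative_centralizer (hP : IsMalnormalCollection P) {i : I}
    [IsMulCommutative (P i)] {b g : G} (hb : b ≠ 1) (hg : g * b * g⁻¹ ∈ P i) :
    IsMulCommutative (centralizer {b}) := by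
  have hg1 : g * b * g⁻¹ ≠ 1 := by rwa [ne_eq, conj_eq_one_iff]
  have : IsMulCommutative (centralizer {(MulAut.conj g).toMonoidHom b}) :=
    isMulCommutative_of_le (hP.centralizer_le hg hg1)
  rw [← comap_centralizer_singleton (MulAut.conj g).toMonoidHom (MulAut.conj g).injective b]
  exact comap_injective_isMulCommutative _ (MulAut.conj g).injective

end IsMalnormalCollection

end

theorem centralizer_abelian_and_bicentralizer_general {π : Type*} [Group π] {I : Type*}
    (P : I → Subgroup π)
    (hmal : IsMalnormalCollection P)
    (hab : ∀ i : I, IsMulCommutative (P i))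
    (hcyc : ∀ b : π, (¬ ∃ (i : I) (g : π), g * b * g⁻¹ ∈ P i) →
      IsCyclic (Subgroup.centralizer ({b} : Set π))) :
    ∀ b : π, b ≠ 1 →
      IsMulCommutative (Subgroup.centralizer ({b} : Set π)) ∧
      Subgroup.centralizer ((Subgroup.centralizer ({b} : Set π) : Subgroup π) : Set π) =
        Subgroup.centralizer ({b} : Set π) := by
  intro b hb
  have hcomm : IsMulCommutative (centralizer {b}) := by
    by_cases hconj : ∃ (i : I) (g : π), g * b * g⁻¹ ∈ P i
    · obtain ⟨i, g, hg⟩ := hconj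
      have := hab i
      exact hmal.isMulCommutative_centralizer hb hg
    · have := hcyc b hconj
      infer_instance
  exact ⟨hcomm, centralizer_centralizer_singleton b⟩

/-- For a group `π` as in the Setup, for every `b ≠ e` the centralizer `Z_π(b)` is abelian
and `Z_π(Z_π(b)) = Z_π(b)`. -/
theorem centralizer_abelian_and_bicentralizer {π : Type*} [Group π] {I : Type*}
    (P : I → Subgroup π)
    (htf : Monoid.IsTorsionFree π)
    (hmal : IsMalnormalCollection P)
    (hab : ∀ i : I, IsMulCommutative (P i))
    (hcyc : ∀ b : π, (¬ ∃ (i : I) (g : π), g * b * g⁻¹ ∈ P i) →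
      IsCyclic (Subgroup.centralizer ({b} : Set π))) :
    ∀ b : π, b ≠ 1 →
      IsMulCommutative (Subgroup.centralizer ({b} : Set π)) ∧
      Subgroup.centralizer ((Subgroup.centralizer ({b} : Set π) : Subgroup π) : Set π) =
        Subgroup.centralizer ({b} : Set π) :=
  centralizer_abelian_and_bicentralizer_general P hmal hab hcyc
end

section
/- Let π be a group as in the Setup. Then condition (M_{TR⊆F₁}) holds for the group π × π, and the maximal elements of F₁∖TR with respect to inclusion are precisely the subgroups H_{γ,b} for γ ∈ π and b ∈ π∖{e}. -/
/-- The family of subgroups of `G` generated by a set `H` of subgroups: all conjugates of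
members of `H` together with all their subgroups. -/
def famGen {G : Type*} [Group G] (H : Set (Subgroup G)) : Set (Subgroup G) :=
  {K | ∃ M ∈ H, ∃ g : G, K ≤ Subgroup.map (MulAut.conj g).toMonoidHom M}

/-- The family `F₁ = F⟨{H_{γ,b} | γ ∈ π, b ∈ π∖{e}}⟩` of subgroups of `π × π`. -/
def famF1 (π : Type*) [Group π] : Set (Subgroup (π × π)) :=
  famGen {K | ∃ γ b : π, b ≠ 1 ∧ K = Hsub γ ({b} : Set π)}

/-- Condition `(M_{E⊆F})`: every element of `F∖E` is contained in a unique element of `F∖E`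
which is maximal in `F∖E` with respect to inclusion. -/
def conditionM {G : Type*} [Group G] (E F : Set (Subgroup G)) : Prop :=
  ∀ H ∈ F \ E, ∃! M : Subgroup G,
    M ∈ F \ E ∧ H ≤ M ∧ ∀ L ∈ F \ E, M ≤ L → M = L

/-!
Malnormality of the abelian `P i` forces the centralizer of a nontrivial element conjugate into
some `P i` into a conjugate of `P i`; otherwise it is cyclic. Either way centralizers of
nontrivial elements are abelian, so commuting nontrivial elements have the same centralizer, and
two subgroups `H_{γ,b}`, `H_{γ',b'}` sharing a nontrivial element coincide. Conjugates of
`H_{γ,b}` are again of this form, so `F₁` consists of the subgroups of the `H_{γ,b}`, a collection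
of nontrivial subgroups with pairwise trivial intersections. A nontrivial subgroup lies below
exactly one member of such a collection, which is then the unique maximal element above it.
-/

section LowerClosure

variable {α : Type*} [PartialOrder α] [OrderBot α] {s : Set α}

theorem Set.PairwiseDisjoint.eq_of_le_of_le (hs : s.PairwiseDisjoint id) {a b c : α}
    (ha : a ∈ s) (hb : b ∈ s) (hc : c ≠ ⊥) (hca : c ≤ a) (hcb : c ≤ b) : a = b :=
  hs.elim ha hb fun h => hc (le_bot_iff.mp (h hca hcb))

theorem Set.PairwiseDisjoint.maximal_mem_lowerClosure_diff_bot_iff (hs : s.PairwiseDisjoint id)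
    (hbot : ⊥ ∉ s) {x : α} : Maximal (· ∈ (lowerClosure s : Set α) \ {⊥}) x ↔ x ∈ s := by
  constructor
  · intro h
    obtain ⟨⟨a, ha, hxa⟩, -⟩ := h.prop
    have ha' : a ∈ (lowerClosure s : Set α) \ {⊥} :=
      ⟨⟨a, ha, le_rfl⟩, fun h => hbot (Set.mem_singleton_iff.mp h ▸ ha)⟩
    rwa [h.eq_of_le ha' hxa]
  · intro hx
    have hx_ne : x ≠ ⊥ := fun h => hbot (h ▸ hx)
    refine ⟨⟨⟨x, hx, le_rfl⟩, hx_ne⟩, fun y ⟨⟨a, ha, hya⟩, _⟩ hxy => ?_⟩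
    rwa [hs.eq_of_le_of_le hx ha hx_ne le_rfl (hxy.trans hya)]

end LowerClosure

theorem conditionM_bot_lowerClosure {G : Type*} [Group G] {s : Set (Subgroup G)}
    (hs : s.PairwiseDisjoint id) (hbot : ⊥ ∉ s) :
    conditionM {⊥} (lowerClosure s : Set (Subgroup G)) := by
  rintro H ⟨⟨M, hM, hHM⟩, hH⟩
  have hmax (x : Subgroup G) := hs.maximal_mem_lowerClosure_diff_bot_iff hbot (x := x)
  obtain ⟨hM_mem, hM_max⟩ := maximal_iff.mp ((hmax M).mpr hM)
  refine ⟨M, ⟨hM_mem, hHM, hM_max⟩, fun M' ⟨hM'_mem, hHM', hM'_max⟩ => ?_⟩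
  exact hs.eq_of_le_of_le ((hmax M').mp (maximal_iff.mpr ⟨hM'_mem, hM'_max⟩)) hM hH hHM' hHM

theorem famGen_eq_lowerClosure {G : Type*} [Group G] {H : Set (Subgroup G)}
    (hH : ∀ M ∈ H, ∀ g : G, M.map (MulAut.conj g).toMonoidHom ∈ H) :
    famGen H = lowerClosure H := by
  ext K
  rw [SetLike.mem_coe, mem_lowerClosure]
  constructor
  · rintro ⟨M, hM, g, hK⟩
    exact ⟨_, hH M hM g, hK⟩
  · rintro ⟨M, hM, hK⟩
    exact ⟨M, hM, 1, fun x hx => ⟨x, hK hx, by simp⟩⟩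

/-- Commutative-transitive groups: commuting is an equivalence relation on nontrivial elements. -/
def IsCommTransitive (G : Type*) [Group G] : Prop :=
  ∀ b : G, b ≠ 1 → IsMulCommutative (Subgroup.centralizer ({b} : Set G))

section Centralizer

variable {G : Type*} [Group G]

theorem mem_centralizer_singleton_comm {b c : G} :
    c ∈ Subgroup.centralizer ({b} : Set G) ↔ b ∈ Subgroup.centralizer ({c} : Set G) := by
  simp only [Subgroup.mem_centralizer_singleton_iff, eq_comm]

theorem IsCommTransitive.centralizer_le (hG : IsCommTransitive G) {b c : G} (hb : b ≠ 1)
    (hcb : c ∈ Subgroup.centralizer ({b} : Set G)) :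
    Subgroup.centralizer ({b} : Set G) ≤ Subgroup.centralizer ({c} : Set G) :=
  haveI := hG b hb
  (Subgroup.le_centralizer _).trans (Subgroup.centralizer_le (Set.singleton_subset_iff.mpr hcb))

theorem IsCommTransitive.centralizer_eq (hG : IsCommTransitive G) {b c : G} (hb : b ≠ 1)
    (hc : c ≠ 1) (hcb : c ∈ Subgroup.centralizer ({b} : Set G)) :
    Subgroup.centralizer ({b} : Set G) = Subgroup.centralizer ({c} : Set G) :=
  le_antisymm (hG.centralizer_le hb hcb)
    (hG.centralizer_le hc (mem_centralizer_singleton_comm.mp hcb))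

theorem IsMalnormalCollection.conj_mem_of_mem_centralizer {I : Type*} {P : I → Subgroup G}
    (hP : IsMalnormalCollection P) {i : I} {b g z : G} (hb : b ≠ 1)
    (hgb : MulAut.conj g b ∈ P i) (hz : z ∈ Subgroup.centralizer ({b} : Set G)) :
    MulAut.conj g z ∈ P i := by
  rcases hP i i (MulAut.conj g z) with hbot | ⟨-, hmem⟩
  · have hfix : MulAut.conj (MulAut.conj g z) (MulAut.conj g b) = MulAut.conj g b := by
      have hzb : z * b * z⁻¹ = b := by
        rw [Subgroup.mem_centralizer_singleton_iff.mp hz, mul_inv_cancel_right]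
      simp only [MulAut.conj_apply]
      calc g * z * g⁻¹ * (g * b * g⁻¹) * (g * z * g⁻¹)⁻¹ = g * (z * b * z⁻¹) * g⁻¹ := by group
        _ = g * b * g⁻¹ := by rw [hzb]
    have hmem : MulAut.conj g b ∈ (P i).map (MulAut.conj (MulAut.conj g z)).toMonoidHom ⊓ P i :=
      ⟨⟨_, hgb, hfix⟩, hgb⟩
    rw [hbot, Subgroup.mem_bot, map_eq_one_iff _ (MulAut.conj g).injective] at hmem
    exact absurd hmem hb
  · exact hmem

theorem IsMalnormalCollection.isCommTransitive {I : Type*} {P : I → Subgroup G}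
    (hP : IsMalnormalCollection P) (hab : ∀ i : I, IsMulCommutative (P i))
    (hcyc : ∀ b : G, (¬ ∃ (i : I) (g : G), g * b * g⁻¹ ∈ P i) →
      IsCyclic (Subgroup.centralizer ({b} : Set G))) :
    IsCommTransitive G := by
  intro b hb
  by_cases hconj : ∃ (i : I) (g : G), g * b * g⁻¹ ∈ P i
  · obtain ⟨i, g, hgb⟩ := hconj
    have hmem : ∀ z ∈ Subgroup.centralizer ({b} : Set G), MulAut.conj g z ∈ P i :=
      fun z => hP.conj_mem_of_mem_centralizer hb hgb
    refine Subgroup.le_centralizer_iff_isMulCommutative.mp fun x hx y hy => ?_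
    apply (MulAut.conj g).injective
    rw [map_mul, map_mul]
    have := hab i
    exact setLike_mul_comm (hmem y hy) (hmem x hx)
  · have := hcyc b hconj
    infer_instance

end Centralizer

section Hsub

variable {π : Type*} [Group π]

theorem mem_Hsub {γ : π} {S : Set π} {p : π × π} :
    p ∈ Hsub γ S ↔ p.2 ∈ Subgroup.centralizer S ∧ p.1 = γ * p.2 * γ⁻¹ := by
  rw [Hsub, Subgroup.mem_map_equiv, Subgroup.mem_map]
  simp only [diagHom, MulAut.conj_symm_apply, MonoidHom.prod_apply, MonoidHom.id_apply,
    Prod.ext_iff, Prod.fst_mul, Prod.snd_mul, Prod.fst_inv, Prod.snd_inv, inv_one, one_mul,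
    mul_one]
  constructor
  · rintro ⟨x, hx, h1, rfl⟩
    exact ⟨hx, by rw [h1]; group⟩
  · rintro ⟨hx, h1⟩
    exact ⟨p.2, hx, by rw [h1]; group, rfl⟩

theorem conj_mem_centralizer_singleton_iff {g b z : π} :
    MulAut.conj g z ∈ Subgroup.centralizer ({MulAut.conj g b} : Set π) ↔
      z ∈ Subgroup.centralizer ({b} : Set π) := by
  simp only [Subgroup.mem_centralizer_singleton_iff, ← map_mul, (MulAut.conj g).injective.eq_iff]

theorem map_conj_Hsub_singleton (g : π × π) (γ b : π) :
    (Hsub γ ({b} : Set π)).map (MulAut.conj g).toMonoidHom =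
      Hsub (g.1 * γ * g.2⁻¹) ({g.2 * b * g.2⁻¹} : Set π) := by
  ext p
  rw [Subgroup.mem_map_equiv, mem_Hsub, mem_Hsub, ← conj_mem_centralizer_singleton_iff (g := g.2)]
  simp only [MulAut.conj_symm_apply, MulAut.conj_apply, Prod.fst_mul, Prod.snd_mul,
    Prod.fst_inv, Prod.snd_inv]
  refine and_congr (by group) ⟨fun h => ?_, fun h => ?_⟩
  · calc p.1 = g.1 * (g.1⁻¹ * p.1 * g.1) * g.1⁻¹ := by group
      _ = _ := by rw [h]; group
  · rw [h]; group

theorem Hsub_eq_of_centralizer_eq {γ : π} {S T : Set π}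
    (h : Subgroup.centralizer S = Subgroup.centralizer T) : Hsub γ S = Hsub γ T := by
  rw [Hsub, Hsub, h]

theorem Hsub_eq_of_inv_mul_mem_centralizer {γ γ' : π} {S : Set π}
    (h : γ'⁻¹ * γ ∈ Subgroup.centralizer (Subgroup.centralizer S : Set π)) :
    Hsub γ S = Hsub γ' S := by
  ext p
  simp only [mem_Hsub]
  refine and_congr_right fun hp => ?_
  have hcomm : p.2 * (γ'⁻¹ * γ) = γ'⁻¹ * γ * p.2 := h p.2 hp
  have hconj : γ * p.2 * γ⁻¹ = γ' * p.2 * γ'⁻¹ := by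
    calc γ * p.2 * γ⁻¹ = γ' * (γ'⁻¹ * γ * p.2) * γ⁻¹ := by group
      _ = γ' * p.2 * γ'⁻¹ := by rw [← hcomm]; group
  rw [hconj]

theorem Hsub_singleton_ne_bot (γ : π) {b : π} (hb : b ≠ 1) : Hsub γ ({b} : Set π) ≠ ⊥ := by
  intro h
  have hmem : ((γ * b * γ⁻¹, b) : π × π) ∈ Hsub γ ({b} : Set π) :=
    mem_Hsub.mpr ⟨Subgroup.mem_centralizer_singleton_iff.mpr rfl, rfl⟩
  rw [h, Subgroup.mem_bot, Prod.ext_iff] at hmem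
  exact hb hmem.2

variable (π) in
def famF1Generators : Set (Subgroup (π × π)) :=
  {K | ∃ γ b : π, b ≠ 1 ∧ K = Hsub γ ({b} : Set π)}

theorem map_conj_mem_famF1Generators {M : Subgroup (π × π)} (hM : M ∈ famF1Generators π)
    (g : π × π) : M.map (MulAut.conj g).toMonoidHom ∈ famF1Generators π := by
  obtain ⟨γ, b, hb, rfl⟩ := hM
  exact ⟨_, _, fun h => hb (conj_eq_one_iff.mp h), map_conj_Hsub_singleton g γ b⟩

theorem famF1_eq_lowerClosure : famF1 π = lowerClosure (famF1Generators π) :=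
  famGen_eq_lowerClosure fun _ hM => map_conj_mem_famF1Generators hM

theorem bot_notMem_famF1Generators : ⊥ ∉ famF1Generators π := by
  rintro ⟨γ, b, hb, h⟩
  exact Hsub_singleton_ne_bot γ hb h.symm

/-- Both sides are `H_{γ,p₂}`: the centralizers of `b`, `p₂`, `b'` agree, and `γ'⁻¹γ`
centralizes the abelian `Z(p₂)`. -/
theorem IsCommTransitive.Hsub_eq_of_mem_of_mem (hπ : IsCommTransitive π) {γ γ' b b' : π}
    (hb : b ≠ 1) (hb' : b' ≠ 1) {p : π × π} (hp : p ≠ 1) (h : p ∈ Hsub γ ({b} : Set π))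
    (h' : p ∈ Hsub γ' ({b'} : Set π)) : Hsub γ ({b} : Set π) = Hsub γ' ({b'} : Set π) := by
  obtain ⟨hc, hp1⟩ := mem_Hsub.mp h
  obtain ⟨hc', hp1'⟩ := mem_Hsub.mp h'
  have hc_ne : p.2 ≠ 1 := fun h1 => hp (Prod.ext (by simp [hp1, h1]) h1)
  have hγ : γ'⁻¹ * γ ∈ Subgroup.centralizer ({p.2} : Set π) := by
    rw [Subgroup.mem_centralizer_singleton_iff]
    calc γ'⁻¹ * γ * p.2 = γ'⁻¹ * (γ * p.2 * γ⁻¹) * γ := by group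
      _ = p.2 * (γ'⁻¹ * γ) := by rw [← hp1, hp1']; group
  have := hπ p.2 hc_ne
  rw [Hsub_eq_of_centralizer_eq (hπ.centralizer_eq hb hc_ne hc),
    Hsub_eq_of_centralizer_eq (hπ.centralizer_eq hb' hc_ne hc'),
    Hsub_eq_of_inv_mul_mem_centralizer (Subgroup.le_centralizer _ hγ)]

theorem IsCommTransitive.pairwiseDisjoint_famF1Generators (hπ : IsCommTransitive π) :
    (famF1Generators π).PairwiseDisjoint id := by
  rintro _ ⟨γ, b, hb, rfl⟩ _ ⟨γ', b', hb', rfl⟩ hne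
  rw [Function.onFun, id, id, Subgroup.disjoint_def]
  intro p h h'
  by_contra hp
  exact hne (hπ.Hsub_eq_of_mem_of_mem hb hb' hp h h')

end Hsub

theorem conditionM_TR_F1_general {π : Type*} [Group π] {I : Type*} (P : I → Subgroup π)
    (hmal : IsMalnormalCollection P)
    (hab : ∀ i : I, IsMulCommutative (P i))
    (hcyc : ∀ b : π, (¬ ∃ (i : I) (g : π), g * b * g⁻¹ ∈ P i) →
      IsCyclic (Subgroup.centralizer ({b} : Set π))) :
    conditionM ({⊥} : Set (Subgroup (π × π))) (famF1 π) ∧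
      ∀ K : Subgroup (π × π),
        (K ∈ famF1 π \ {⊥} ∧ ∀ L ∈ famF1 π \ ({⊥} : Set (Subgroup (π × π))), K ≤ L → K = L) ↔
          ∃ γ b : π, b ≠ 1 ∧ K = Hsub γ ({b} : Set π) := by
  have hdisj := (hmal.isCommTransitive hab hcyc).pairwiseDisjoint_famF1Generators
  rw [famF1_eq_lowerClosure]
  refine ⟨conditionM_bot_lowerClosure hdisj bot_notMem_famF1Generators, fun K => ?_⟩
  exact maximal_iff.symm.trans
    (hdisj.maximal_mem_lowerClosure_diff_bot_iff bot_notMem_famF1Generators)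

/-- For a group `π` as in the Setup, condition `(M_{TR⊆F₁})` holds for `π × π`, and the maximal
elements of `F₁∖TR` are precisely the subgroups `H_{γ,b}` with `γ ∈ π`, `b ∈ π∖{e}`. -/
theorem conditionM_TR_F1 {π : Type*} [Group π] {I : Type*} (P : I → Subgroup π)
    (htf : ∀ g : π, g ≠ 1 → ¬IsOfFinOrder g)
    (hmal : IsMalnormalCollection P)
    (hab : ∀ i : I, IsMulCommutative (P i))
    (hcyc : ∀ b : π, (¬ ∃ (i : I) (g : π), g * b * g⁻¹ ∈ P i) →
      IsCyclic (Subgroup.centralizer ({b} : Set π))) :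
    conditionM ({⊥} : Set (Subgroup (π × π))) (famF1 π) ∧
      ∀ K : Subgroup (π × π),
        (K ∈ famF1 π \ {⊥} ∧ ∀ L ∈ famF1 π \ ({⊥} : Set (Subgroup (π × π))), K ≤ L → K = L) ↔
          ∃ γ b : π, b ≠ 1 ∧ K = Hsub γ ({b} : Set π) :=
  conditionM_TR_F1_general P hmal hab hcyc
end

section
/- Let π be a group as in the Setup. Then for every γ ∈ π and b ∈ π∖{e}, the normalizer of H_{γ,b} in π × π equals {(γkhγ⁻¹, h) ∈ π × π | h, k ∈ Z_π(b)}, and this normalizer is isomorphic as a group to Z_π(b) × Z_π(b). -/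
/-!
Everything rests on one property of `Z = Z_π(b)` for `b ≠ e`: it is abelian and equal to its
own normalizer. Granted this, the normalizer of the diagonal `Δ(Z)` in `π × π` is `Z × Z`: both
projections of an element normalizing `Δ(Z)` normalize `Z`, and `Z × Z` centralizes `Δ(Z)`.
Conjugating by `(γ, e)` then gives the normalizer of `H_{γ,b}`.

If `b` is conjugate to some `a ∈ P_i`, malnormality gives `Z_π(a) = P_i` and `N_π(P_i) = P_i`, and
`Z` is a conjugate of `P_i`. Otherwise `Z = ⟨c⟩` is infinite cyclic, so an element `y` normalizing
it conjugates `c` to `c^{±1}`. If `y` inverted `c`, then `y²` would centralize `b`, hence lie in `Z`,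
and be inverted by `y`; so `y⁴ = e`, forcing `y = e` and `c² = e` by torsion-freeness.
-/

section

open Subgroup

variable {G : Type*} [Group G]

structure Subgroup.IsAbelianSelfNormalizing (K : Subgroup G) : Prop where
  isMulCommutative : IsMulCommutative K
  normalizer_le : normalizer (K : Set G) ≤ K

theorem Subgroup.IsAbelianSelfNormalizing.map {G' : Type*} [Group G'] {K : Subgroup G}
    (hK : K.IsAbelianSelfNormalizing) (e : G ≃* G') :
    (K.map e.toMonoidHom).IsAbelianSelfNormalizing := by
  have := hK.isMulCommutative
  refine ⟨inferInstance, ?_⟩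
  rw [← map_equiv_normalizer_eq]
  exact map_mono hK.normalizer_le

theorem centralizer_singleton_conj (g b : G) :
    centralizer {g * b * g⁻¹} = (centralizer {b}).map (MulAut.conj g).toMonoidHom := by
  ext x
  rw [mem_map_equiv, mem_centralizer_singleton_iff, mem_centralizer_singleton_iff]
  simp only [MulAut.conj_symm_apply]
  constructor <;> intro h
  · calc g⁻¹ * x * g * b = g⁻¹ * (x * (g * b * g⁻¹)) * g := by group
      _ = g⁻¹ * ((g * b * g⁻¹) * x) * g := by rw [h]
      _ = b * (g⁻¹ * x * g) := by group
  · calc x * (g * b * g⁻¹) = g * ((g⁻¹ * x * g) * b) * g⁻¹ := by group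
      _ = g * (b * (g⁻¹ * x * g)) * g⁻¹ := by rw [h]
      _ = g * b * g⁻¹ * x := by group

def Subgroup.IsMalnormal (A : Subgroup G) : Prop :=
  ∀ g : G, A.map (MulAut.conj g).toMonoidHom ⊓ A = ⊥ ∨ g ∈ A

theorem IsMalnormalCollection.isMalnormal {I : Type*} {P : I → Subgroup G}
    (hP : IsMalnormalCollection P) (i : I) : (P i).IsMalnormal := fun g =>
  (hP i i g).imp_right And.right

namespace Subgroup.IsMalnormal

variable {A : Subgroup G} {a : G}

theorem mem_of_conj_mem (hA : A.IsMalnormal) (ha : a ∈ A) (ha1 : a ≠ 1) {g : G}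
    (hga : g * a * g⁻¹ ∈ A) : g ∈ A := by
  refine (hA g).resolve_left fun hbot => ?_
  have hmem : g * a * g⁻¹ ∈ A.map (MulAut.conj g).toMonoidHom ⊓ A := ⟨⟨a, ha, rfl⟩, hga⟩
  rw [hbot, mem_bot, conj_eq_one_iff] at hmem
  exact ha1 hmem

theorem normalizer_le (hA : A.IsMalnormal) (ha : a ∈ A) (ha1 : a ≠ 1) :
    normalizer (A : Set G) ≤ A := fun _ hg =>
  hA.mem_of_conj_mem ha ha1 ((mem_normalizer_iff.mp hg a).mp ha)

theorem centralizer_eq [IsMulCommutative A] (hA : A.IsMalnormal) (ha : a ∈ A) (ha1 : a ≠ 1) :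
    centralizer {a} = A := by
  refine le_antisymm (fun g hg => hA.mem_of_conj_mem ha ha1 ?_) fun x hx => ?_
  · rwa [mem_centralizer_singleton_iff.mp hg, mul_inv_cancel_right]
  · exact mem_centralizer_singleton_iff.mpr (setLike_mul_comm hx ha)

theorem isAbelianSelfNormalizing_centralizer [IsMulCommutative A] (hA : A.IsMalnormal)
    (ha : a ∈ A) (ha1 : a ≠ 1) :
    (centralizer {a}).IsAbelianSelfNormalizing := by
  rw [hA.centralizer_eq ha ha1]
  exact ⟨inferInstance, hA.normalizer_le ha ha1⟩

end Subgroup.IsMalnormal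

theorem Monoid.IsTorsionFree.eq_one_of_pow_eq_one (htf : Monoid.IsTorsionFree G) {g : G} {n : ℕ}
    (hn : n ≠ 0) (h : g ^ n = 1) : g = 1 :=
  by_contra fun hg => htf g hg (isOfFinOrder_iff_pow_eq_one.mpr ⟨n, Nat.pos_of_ne_zero hn, h⟩)

theorem conj_eq_or_eq_inv_of_mem_normalizer_zpowers {c y : G} (hc : ¬IsOfFinOrder c)
    (hy : y ∈ normalizer (zpowers c : Set G)) : y * c * y⁻¹ = c ∨ y * c * y⁻¹ = c⁻¹ := by
  obtain ⟨m, hm⟩ := mem_zpowers_iff.mp ((mem_normalizer_iff.mp hy c).mp (mem_zpowers c))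
  obtain ⟨l, hl⟩ := mem_zpowers_iff.mp ((mem_normalizer_iff''.mp hy c).mp (mem_zpowers c))
  have hlm : c ^ (l * m) = c ^ (1 : ℤ) := by
    rw [zpow_mul, hl, show y⁻¹ * c * y = y⁻¹ * c * y⁻¹⁻¹ by rw [inv_inv], conj_zpow, hm]
    group
  rcases Int.mul_eq_one_iff_eq_one_or_neg_one.mp (injective_zpow_iff_not_isOfFinOrder.mpr hc hlm)
    with ⟨-, rfl⟩ | ⟨-, rfl⟩
  · exact .inl (by rw [← hm, zpow_one])
  · exact .inr (by rw [← hm, zpow_neg, zpow_one])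

theorem Monoid.IsTorsionFree.eq_one_of_conj_eq_inv (htf : Monoid.IsTorsionFree G) {c y : G}
    (hyc : y * c * y⁻¹ = c⁻¹) (hy2 : y ^ 2 ∈ zpowers c) : c = 1 := by
  have hinv : ∀ w ∈ zpowers c, y * w * y⁻¹ = w⁻¹ := by
    rintro _ ⟨s, rfl⟩
    rw [← conj_zpow, hyc, inv_zpow]
  have hy4 : y ^ 4 = 1 := by
    have := hinv _ hy2
    rw [show y * y ^ 2 * y⁻¹ = y ^ 2 by group] at this
    rw [show 4 = 2 + 2 from rfl, pow_add]
    nth_rewrite 1 [this]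
    exact inv_mul_cancel _
  have hy : y = 1 := htf.eq_one_of_pow_eq_one (by norm_num) hy4
  rw [hy, one_mul, inv_one, mul_one, eq_inv_iff_mul_eq_one] at hyc
  exact htf.eq_one_of_pow_eq_one two_ne_zero (by rw [sq, hyc])

theorem Monoid.IsTorsionFree.isAbelianSelfNormalizing_centralizer_of_isCyclic
    (htf : Monoid.IsTorsionFree G) {b : G} (hb : b ≠ 1) [hZ : IsCyclic (centralizer {b})] :
    (centralizer {b}).IsAbelianSelfNormalizing := by
  refine ⟨inferInstance, fun y hy => ?_⟩
  obtain ⟨c, hc⟩ := (centralizer {b}).isCyclic_iff_exists_zpowers_eq_top.mp hZ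
  have hbc : b ∈ zpowers c := hc ▸ mem_centralizer_singleton_iff.mpr rfl
  have mem_of_commute : ∀ x : G, Commute x c → x ∈ centralizer {b} := by
    intro x hx
    obtain ⟨n, rfl⟩ := mem_zpowers_iff.mp hbc
    exact mem_centralizer_singleton_iff.mpr (hx.zpow_right n).eq
  have hc1 : c ≠ 1 := by
    rintro rfl
    exact hb (by simpa using hbc)
  rw [← hc] at hy ⊢
  rcases conj_eq_or_eq_inv_of_mem_normalizer_zpowers (htf c hc1) hy with hyc | hyc
  · exact hc ▸ mem_of_commute y (mul_inv_eq_iff_eq_mul.mp hyc)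
  · refine absurd (htf.eq_one_of_conj_eq_inv hyc (hc ▸ mem_of_commute _ ?_)) hc1
    rw [Commute, SemiconjBy, ← mul_inv_eq_iff_eq_mul]
    calc y ^ 2 * c * (y ^ 2)⁻¹ = (y * (y * c * y⁻¹)⁻¹ * y⁻¹)⁻¹ := by
          simp only [sq, mul_inv_rev, inv_inv, mul_assoc]
      _ = c := by rw [hyc, inv_inv, hyc, inv_inv]

theorem isAbelianSelfNormalizing_centralizer_singleton {I : Type*} {P : I → Subgroup G}
    (htf : Monoid.IsTorsionFree G) (hmal : IsMalnormalCollection P)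
    (hab : ∀ i, IsMulCommutative (P i))
    (hcyc : ∀ b : G, (¬ ∃ (i : I) (g : G), g * b * g⁻¹ ∈ P i) →
      IsCyclic (centralizer ({b} : Set G)))
    {b : G} (hb : b ≠ 1) : (centralizer {b}).IsAbelianSelfNormalizing := by
  by_cases hconj : ∃ (i : I) (g : G), g * b * g⁻¹ ∈ P i
  · obtain ⟨i, g, hg⟩ := hconj
    have hgb : g * b * g⁻¹ ≠ 1 := by rwa [Ne, conj_eq_one_iff]
    have hb' : b = g⁻¹ * (g * b * g⁻¹) * g⁻¹⁻¹ := by group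
    rw [hb', centralizer_singleton_conj]
    exact ((hmal.isMalnormal i).isAbelianSelfNormalizing_centralizer hg hgb).map _
  · have := hcyc b hconj
    exact htf.isAbelianSelfNormalizing_centralizer_of_isCyclic hb

theorem normalizer_map_diagHom {K : Subgroup G} (hK : K.IsAbelianSelfNormalizing) :
    normalizer (K.map (diagHom G) : Set (G × G)) = K.prod K := by
  have := hK.isMulCommutative
  have map_fst : (K.map (diagHom G)).map (MonoidHom.fst G G) = K := by
    rw [map_map]; exact K.map_id
  have map_snd : (K.map (diagHom G)).map (MonoidHom.snd G G) = K := by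
    rw [map_map]; exact K.map_id
  refine le_antisymm (fun p hp => ?_) ?_
  · exact ⟨hK.normalizer_le (map_fst ▸ le_normalizer_map _ (mem_map_of_mem _ hp)),
      hK.normalizer_le (map_snd ▸ le_normalizer_map _ (mem_map_of_mem _ hp))⟩
  · refine le_trans (fun p hp => ?_) (centralizer_le_normalizer _)
    rw [mem_centralizer_iff]
    rintro _ ⟨z, hz, rfl⟩
    exact Prod.ext (setLike_mul_comm hz hp.1) (setLike_mul_comm hz hp.2)

theorem normalizer_Hsub_eq (γ : G) {S : Set G} (hS : (centralizer S).IsAbelianSelfNormalizing) :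
    normalizer (Hsub γ S : Set (G × G)) =
      ((centralizer S).prod (centralizer S)).map (MulAut.conj ((γ, 1) : G × G)).toMonoidHom := by
  rw [Hsub, ← map_equiv_normalizer_eq, normalizer_map_diagHom hS]

theorem mem_map_conj_prod_iff (γ : G) (K : Subgroup G) (p : G × G) :
    p ∈ (K.prod K).map (MulAut.conj ((γ, 1) : G × G)).toMonoidHom ↔
      ∃ h k : G, h ∈ K ∧ k ∈ K ∧ p = (γ * k * h * γ⁻¹, h) := by
  rw [mem_map_equiv]
  simp only [MulAut.conj_symm_apply, mem_prod, Prod.fst_mul, Prod.snd_mul, Prod.fst_inv,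
    Prod.snd_inv, inv_one, one_mul, mul_one]
  constructor
  · rintro ⟨h₁, h₂⟩
    refine ⟨p.2, γ⁻¹ * p.1 * γ * p.2⁻¹, h₂, mul_mem (by simpa using h₁) (inv_mem h₂), ?_⟩
    ext <;> simp [mul_assoc]
  · rintro ⟨h, k, hh, hk, rfl⟩
    simpa [mul_assoc] using ⟨mul_mem hk hh, hh⟩

end

/-- For a group `π` as in the Setup, for every `γ ∈ π` and `b ∈ π∖{e}`, the normalizer of
`H_{γ,b}` in `π × π` equals `{(γkhγ⁻¹, h) | h, k ∈ Z_π(b)}` and is isomorphic to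
`Z_π(b) × Z_π(b)`. -/
theorem normalizer_Hsub {π : Type*} [Group π] {I : Type*} (P : I → Subgroup π)
    (htf : Monoid.IsTorsionFree π)
    (hmal : IsMalnormalCollection P)
    (hab : ∀ i : I, IsMulCommutative (P i))
    (hcyc : ∀ b : π, (¬ ∃ (i : I) (g : π), g * b * g⁻¹ ∈ P i) →
      IsCyclic (Subgroup.centralizer ({b} : Set π))) :
    ∀ γ b : π, b ≠ 1 →
      ((Subgroup.normalizer (Hsub γ ({b} : Set π) : Set (π × π)) : Set (π × π)) =
        {p : π × π | ∃ h k : π, h ∈ Subgroup.centralizer ({b} : Set π) ∧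
          k ∈ Subgroup.centralizer ({b} : Set π) ∧ p = (γ * k * h * γ⁻¹, h)}) ∧
      Nonempty (Subgroup.normalizer (Hsub γ ({b} : Set π) : Set (π × π)) ≃*
        Subgroup.centralizer ({b} : Set π) × Subgroup.centralizer ({b} : Set π)) := by
  intro γ b hb
  rw [normalizer_Hsub_eq γ (isAbelianSelfNormalizing_centralizer_singleton htf hmal hab hcyc hb)]
  exact ⟨Set.ext (mem_map_conj_prod_iff γ _),
    ⟨((MulAut.conj _).subgroupMap _).symm.trans (Subgroup.prodEquiv _ _)⟩⟩
end
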